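/- arXiv:2012.11215 — 4 statements merged into one kernel-verified Lean document; each statement's English description precedes it below -/
import Mathlib

section
/- (Proposition, NPV of the new test) Under assumptions (A1), (A2), (A4) and the testing logic, the new test's negative predictive value NPV_z := P(x=0|z=0,t=1) satisfies NPV_z ∈ [ max{ 0, P(y=0|z=0,t=1) − χ̄(1−σ)/(1−ζ) } , min{ (1−χ̄)/(1−ζ), P(y=0|z=0,t=1) } ], where χ̄ = γ/σ; these bounds are sharp (each endpoint attained by a distribution consistent with the data), and they coincide with the four-case expressions: [P(y=0|z=0,t=1)−χ̄(1−σ)/(1−ζ), (1−χ̄)/(1−ζ)] in case (C), [P(y=0|z=0,t=1)−χ̄(1−σ)/(1−ζ), P(y=0|z=0,t=1)] in case (I), [0, (1−χ̄)/(1−ζ)] in case (U), and [0, P(y=0|z=0,t=1)] in case (X). -/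
/-!
Population model: a pmf `P` on `{0,1}^4` over `(x, y, z, t)` where `x = true` means truly
infected, `y` is the established test result, `z` the new test result, and `t = true` means
the person belongs to the testing pool.  The testing logic requires `z = 1 → t = 1`.
-/

namespace PaperTest

abbrev Dist := Bool → Bool → Bool → Bool → ℝ

/-- Probability of the event `A` under `P`. -/
noncomputable def pr (P : Dist) (A : Bool → Bool → Bool → Bool → Bool) : ℝ :=
  ∑ x : Bool, ∑ y : Bool, ∑ z : Bool, ∑ t : Bool, if A x y z t then P x y z t else 0

/-- Conditional probability `P(A | B)`. -/
noncomputable def cpr (P : Dist) (A B : Bool → Bool → Bool → Bool → Bool) : ℝ :=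
  pr P (fun x y z t => A x y z t && B x y z t) / pr P B

def IsPMF (P : Dist) : Prop :=
  (∀ x y z t, 0 ≤ P x y z t) ∧
    (∑ x : Bool, ∑ y : Bool, ∑ z : Bool, ∑ t : Bool, P x y z t) = 1

/-- Testing logic: `z = 1` implies `t = 1`, i.e. there is no mass on `z = 1 ∧ t = 0`. -/
def TestLogic (P : Dist) : Prop := ∀ x y, P x y true false = 0

/-- Prevalence `p = P(x=1)`. -/
noncomputable def prev (P : Dist) : ℝ := pr P fun x _ _ _ => x

/-- Sensitivity of the established test, `σ = P(y=1 | x=1)`. -/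
noncomputable def sens (P : Dist) : ℝ := cpr P (fun _ y _ _ => y) (fun x _ _ _ => x)

/-- `τ = P(t=1)`. -/
noncomputable def tau (P : Dist) : ℝ := pr P fun _ _ _ t => t

/-- `γ = P(y=1 | t=1)`. -/
noncomputable def gamma (P : Dist) : ℝ := cpr P (fun _ y _ _ => y) (fun _ _ _ t => t)

/-- `ζ = P(z=1 | t=1)`. -/
noncomputable def zeta (P : Dist) : ℝ := cpr P (fun _ _ z _ => z) (fun _ _ _ t => t)

/-- `χ̄ = γ/σ`, the prevalence in the testing pool. -/
noncomputable def chibar (P : Dist) : ℝ := gamma P / sens P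

/-- (A1) non-trivial prevalence. -/
def A1 (P : Dist) : Prop := 0 < prev P ∧ prev P < 1

/-- (A2) no false positives for the established test: `P(x=0, y=1) = 0`. -/
def A2 (P : Dist) : Prop := pr P (fun x y _ _ => !x && y) = 0

/-- (A3) test monotonicity: `P(x=1 | t=1) ≥ P(x=1 | t=0)`. -/
def A3 (P : Dist) : Prop :=
  cpr P (fun x _ _ _ => x) (fun _ _ _ t => t) ≥ cpr P (fun x _ _ _ => x) (fun _ _ _ t => !t)

/-- (A4) health sufficiency: `P(y=1 | x=1, t=1) = P(y=1 | x=1) = σ`. -/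
def A4 (P : Dist) : Prop := cpr P (fun _ y _ _ => y) (fun x _ _ t => x && t) = sens P

/-- `P(y=1, z=1 | t=1)`. -/
noncomputable def q11 (P : Dist) : ℝ := cpr P (fun _ y z _ => y && z) (fun _ _ _ t => t)

/-- `P(y=1, z=0 | t=1)`. -/
noncomputable def q10 (P : Dist) : ℝ := cpr P (fun _ y z _ => y && !z) (fun _ _ _ t => t)

/-- `P(y=0, z=1 | t=1)`. -/
noncomputable def q01 (P : Dist) : ℝ := cpr P (fun _ y z _ => !y && z) (fun _ _ _ t => t)

/-- `P(y=0, z=0 | t=1)`. -/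
noncomputable def q00 (P : Dist) : ℝ := cpr P (fun _ y z _ => !y && !z) (fun _ _ _ t => t)

/-- `Q` induces the same conditional data distribution `P(y, z | t=1)` and the same
sensitivity `σ` of the established test as `P`. -/
def SameData (P Q : Dist) : Prop :=
  (∀ y0 z0 : Bool,
      cpr Q (fun _ y z _ => (y == y0) && (z == z0)) (fun _ _ _ t => t) =
        cpr P (fun _ y z _ => (y == y0) && (z == z0)) (fun _ _ _ t => t)) ∧
    sens Q = sens P

/-- Assumptions (A1), (A2), (A4), the testing logic, and the maintained regularity
conditions `γ > 0`, `0 < ζ < 1`, `P(t=1) > 0`, and `γ < σ ≤ 1`. -/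
def Setup (P : Dist) : Prop :=
  IsPMF P ∧ TestLogic P ∧ A1 P ∧ A2 P ∧ A4 P ∧
    0 < gamma P ∧ 0 < zeta P ∧ zeta P < 1 ∧ 0 < tau P ∧ gamma P < sens P ∧ sens P ≤ 1

/-- `Q` is consistent with the data of `P`: it satisfies all assumptions and induces the
same `P(y, z | t=1)` and the same `σ`. -/
def Consistent (P Q : Dist) : Prop := Setup Q ∧ SameData P Q

/-- The new test's negative predictive value `NPV_z = P(x=0 | z=0, t=1)`. -/
noncomputable def npvZ (P : Dist) : ℝ := cpr P (fun x _ _ _ => !x) (fun _ _ z t => !z && t)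

/-- `P(y=0 | z=0, t=1)`. -/
noncomputable def pynGzn (P : Dist) : ℝ := cpr P (fun _ y _ _ => !y) (fun _ _ z t => !z && t)

/-- Case (C), confirmatory. -/
def CaseC (P : Dist) : Prop := q00 P ≥ max (chibar P * (1 - sens P)) (1 - chibar P)

/-- Case (I), informative. -/
def CaseI (P : Dist) : Prop := 1 - chibar P > q00 P ∧ q00 P ≥ chibar P * (1 - sens P)

/-- Case (U), uninformative. -/
def CaseU (P : Dist) : Prop := chibar P * (1 - sens P) > q00 P ∧ q00 P ≥ 1 - chibar P

/-- Case (X), contradictory. -/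
def CaseX (P : Dist) : Prop := min (chibar P * (1 - sens P)) (1 - chibar P) > q00 P

-- expansion helpers
lemma prT_exp (R : Dist) : pr R (fun _ _ _ t => t) =
    R true true true true + R true true false true + R true false true true +
    R true false false true + R false true true true + R false true false true +
    R false false true true + R false false false true := by
  simp only [pr, Fintype.sum_bool]; norm_num; try ring

lemma przt_exp (R : Dist) : pr R (fun x y z t => z && t) =
    R true true true true + R true false true true + R false true true true +
    R false false true true := by
  simp only [pr, Fintype.sum_bool]; norm_num; try ring

lemma prnzt_exp (R : Dist) : pr R (fun x y z t => !z && t) =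
    R true true false true + R true false false true + R false true false true +
    R false false false true := by
  simp only [pr, Fintype.sum_bool]; norm_num; try ring

lemma pryt_exp (R : Dist) : pr R (fun x y z t => y && t) =
    R true true true true + R true true false true + R false true true true +
    R false true false true := by
  simp only [pr, Fintype.sum_bool]; norm_num; try ring

lemma pryxt_exp (R : Dist) : pr R (fun x y z t => y && (x && t)) =
    R true true true true + R true true false true := by
  simp only [pr, Fintype.sum_bool]; norm_num; try ring

lemma prxt_exp (R : Dist) : pr R (fun x y z t => x && t) =
    R true true true true + R true true false true + R true false true true +
    R true false false true := by
  simp only [pr, Fintype.sum_bool]; norm_num; try ring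

lemma prnxnzt_exp (R : Dist) : pr R (fun x y z t => !x && (!z && t)) =
    R false true false true + R false false false true := by
  simp only [pr, Fintype.sum_bool]; norm_num; try ring

lemma prnynzt_exp (R : Dist) : pr R (fun x y z t => !y && (!z && t)) =
    R true false false true + R false false false true := by
  simp only [pr, Fintype.sum_bool]; norm_num; try ring

lemma prnxy_exp (R : Dist) : pr R (fun x y _ _ => !x && y) =
    R false true true true + R false true true false + R false true false true +
    R false true false false := by
  simp only [pr, Fintype.sum_bool]; norm_num; try ring

lemma npvZ_eq (R : Dist) : npvZ R =
    pr R (fun x y z t => !x && (!z && t)) / pr R (fun x y z t => !z && t) := rfl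

lemma pynGzn_eq (R : Dist) : pynGzn R =
    pr R (fun x y z t => !y && (!z && t)) / pr R (fun x y z t => !z && t) := rfl

lemma gamma_eq (R : Dist) : gamma R =
    pr R (fun x y z t => y && t) / pr R (fun _ _ _ t => t) := rfl

lemma zeta_eq (R : Dist) : zeta R =
    pr R (fun x y z t => z && t) / pr R (fun _ _ _ t => t) := rfl

lemma a4_eq (R : Dist) (h : A4 R) :
    pr R (fun x y z t => y && (x && t)) / pr R (fun x y z t => x && t) = sens R := h

lemma facts (R : Dist) (h : Setup R) :
    (0 ≤ q11 R ∧ 0 ≤ q10 R ∧ 0 ≤ q01 R ∧ 0 ≤ q00 R) ∧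
    (q11 R + q10 R = gamma R ∧ q11 R + q01 R = zeta R ∧
      q11 R + q10 R + q01 R + q00 R = 1) ∧
    (pynGzn R = q00 R / (1 - zeta R)) ∧
    (0 < sens R ∧ 0 < chibar R ∧ chibar R < 1 ∧ chibar R * sens R = gamma R) := by
  obtain ⟨⟨hpos, -⟩, -, -, -, -, hg, hz, hz1, ht, hgs, hs1⟩ := h
  have hs : 0 < sens R := lt_trans hg hgs
  have hsne : sens R ≠ 0 := ne_of_gt hs
  have hchi1 : chibar R < 1 := by
    rw [chibar, div_lt_one hs]; exact hgs
  have hchi0 : 0 < chibar R := div_pos hg hs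
  refine ⟨⟨?_, ?_, ?_, ?_⟩, ⟨?_, ?_, ?_⟩, ?_, hs, hchi0, hchi1, ?_⟩
  · simp only [q11, cpr, pr, Fintype.sum_bool]; norm_num
    apply div_nonneg <;> (repeat first | apply add_nonneg | apply hpos)
  · simp only [q10, cpr, pr, Fintype.sum_bool]; norm_num
    apply div_nonneg <;> (repeat first | apply add_nonneg | apply hpos)
  · simp only [q01, cpr, pr, Fintype.sum_bool]; norm_num
    apply div_nonneg <;> (repeat first | apply add_nonneg | apply hpos)
  · simp only [q00, cpr, pr, Fintype.sum_bool]; norm_num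
    apply div_nonneg <;> (repeat first | apply add_nonneg | apply hpos)
  · simp only [q11, q10, gamma, cpr, pr, Fintype.sum_bool] at *; norm_num at *
    rw [← add_div]; congr 1; ring
  · simp only [q11, q01, zeta, cpr, pr, Fintype.sum_bool] at *; norm_num at *
    rw [← add_div]; congr 1; ring
  · have htne : tau R ≠ 0 := ne_of_gt ht
    simp only [q11, q10, q01, q00, cpr, pr, tau, Fintype.sum_bool] at *; norm_num at *
    rw [← add_div, ← add_div, ← add_div, div_eq_one_iff_eq htne]
    ring
  · -- pynGzn = q00 / (1 - zeta)
    have htne : pr R (fun _ _ _ t => t) ≠ 0 := ne_of_gt ht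
    have hD : pr R (fun _ _ z t => !z && t) = (1 - zeta R) * pr R (fun _ _ _ t => t) := by
      simp only [zeta, cpr, pr, Fintype.sum_bool] at *; norm_num at *
      field_simp
      ring
    have : (pr R fun x y z t => (!y && (!z && t))) = pr R fun x y z t => ((!y && !z) && t) := by
      congr 1; funext x y z t; cases y <;> cases z <;> cases t <;> rfl
    rw [pynGzn, q00, cpr, cpr, this, div_div, hD]
    ring_nf
  · rw [chibar, div_mul_cancel₀ _ hsne]

lemma npv_bounds (R : Dist) (h : Setup R) :
    max 0 (pynGzn R - chibar R * (1 - sens R) / (1 - zeta R)) ≤ npvZ R ∧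
    npvZ R ≤ min ((1 - chibar R) / (1 - zeta R)) (pynGzn R) := by
  obtain ⟨⟨hpos, -⟩, -, -, ha2, ha4, hg, hz, hz1, ht, hgs, hs1⟩ := h
  have hs : 0 < sens R := lt_trans hg hgs
  have hT : (0:ℝ) < pr R (fun _ _ _ t => t) := ht
  have hTne := ne_of_gt hT
  -- A2 atoms vanish
  have ha2' := ha2
  rw [A2, prnxy_exp] at ha2'
  have e1 : R false true true true = 0 := by
    linarith [hpos false true true true, hpos false true false true,
      hpos false true true false, hpos false true false false]
  have e2 : R false true false true = 0 := by
    linarith [hpos false true true true, hpos false true false true,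
      hpos false true true false, hpos false true false false]
  have hyt : pr R (fun x y z t => y && t) = gamma R * pr R (fun _ _ _ t => t) := by
    rw [gamma_eq, div_mul_cancel₀ _ hTne]
  have hGA : pr R (fun x y z t => y && (x && t)) = gamma R * pr R (fun _ _ _ t => t) := by
    rw [← hyt, pryxt_exp, pryt_exp]; linarith
  have ha4' := a4_eq R ha4
  have hXne : pr R (fun x y z t => x && t) ≠ 0 := by
    intro h0
    rw [h0, div_zero] at ha4'
    exact absurd ha4'.symm (ne_of_gt hs)
  have hX : pr R (fun x y z t => x && t) = chibar R * pr R (fun _ _ _ t => t) := by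
    rw [div_eq_iff hXne] at ha4'
    rw [chibar, div_mul_eq_mul_div, eq_div_iff (ne_of_gt hs)]
    linarith [ha4', hGA]
  have hD : pr R (fun x y z t => !z && t) = (1 - zeta R) * pr R (fun _ _ _ t => t) := by
    have hzz : pr R (fun x y z t => z && t) = zeta R * pr R (fun _ _ _ t => t) := by
      rw [zeta_eq, div_mul_cancel₀ _ hTne]
    rw [przt_exp] at hzz
    rw [prnzt_exp, sub_mul, one_mul, ← hzz, prT_exp]
    ring
  have hW : (0:ℝ) < 1 - zeta R := by linarith
  have hDpos : (0:ℝ) < pr R (fun x y z t => !z && t) := by rw [hD]; exact mul_pos hW hT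
  have hnpv : npvZ R = R false false false true / pr R (fun x y z t => !z && t) := by
    rw [npvZ_eq, prnxnzt_exp, e2, zero_add]
  have hpyn : pynGzn R = (R false false false true + R true false false true) /
      pr R (fun x y z t => !z && t) := by
    rw [pynGzn_eq, prnynzt_exp, add_comm]
  have hcs : chibar R * sens R = gamma R := by
    rw [chibar, div_mul_cancel₀ _ (ne_of_gt hs)]
  have hbub : R true false false true ≤
      chibar R * (1 - sens R) * pr R (fun _ _ _ t => t) := by
    have hXe := hX; rw [prxt_exp] at hXe
    have hGe := hGA; rw [pryxt_exp] at hGe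
    have hcsT : chibar R * sens R * pr R (fun _ _ _ t => t)
        = gamma R * pr R (fun _ _ _ t => t) := by rw [hcs]
    linarith [hpos true false true true, hXe, hGe, hcsT]
  have haub : R false false false true ≤ (1 - chibar R) * pr R (fun _ _ _ t => t) := by
    have hXe := hX; rw [prxt_exp] at hXe
    have hTe := prT_exp R
    linarith [hpos false false true true, hpos false true true true, hpos false true false true,
      hXe, hTe]
  have ha0 : (0:ℝ) ≤ R false false false true := hpos false false false true
  have hb0 : (0:ℝ) ≤ R true false false true := hpos true false false true
  constructor
  · apply max_le
    · rw [hnpv]; exact div_nonneg ha0 (le_of_lt hDpos)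
    · have key : pynGzn R - npvZ R ≤ chibar R * (1 - sens R) / (1 - zeta R) := by
        rw [hnpv, hpyn, div_sub_div_same, add_sub_cancel_left, hD,
          div_le_div_iff₀ (mul_pos hW hT) hW]
        linarith [mul_le_mul_of_nonneg_right hbub hW.le]
      linarith
  · apply le_min
    · rw [hnpv, hD, div_le_div_iff₀ (mul_pos hW hT) hW]
      linarith [mul_le_mul_of_nonneg_right haub hW.le]
    · rw [hnpv, hpyn, div_le_div_iff₀ hDpos hDpos]
      linarith [mul_le_mul_of_nonneg_right (le_add_of_nonneg_right hb0 : R false false false true ≤ R false false false true + R true false false true) hDpos.le]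

lemma qev_tt (R : Dist) :
    cpr R (fun _ y z _ => (y == true) && (z == true)) (fun _ _ _ t => t) = q11 R := by
  simp [q11]
lemma qev_tf (R : Dist) :
    cpr R (fun _ y z _ => (y == true) && (z == false)) (fun _ _ _ t => t) = q10 R := by
  simp [q10]
lemma qev_ft (R : Dist) :
    cpr R (fun _ y z _ => (y == false) && (z == true)) (fun _ _ _ t => t) = q01 R := by
  simp [q01]
lemma qev_ff (R : Dist) :
    cpr R (fun _ y z _ => (y == false) && (z == false)) (fun _ _ _ t => t) = q00 R := by
  simp [q00]

lemma transfer (P Q : Dist) (hP : Setup P) (hQ : Setup Q) (hsd : SameData P Q) :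
    gamma Q = gamma P ∧ zeta Q = zeta P ∧ chibar Q = chibar P ∧ sens Q = sens P ∧
      pynGzn Q = pynGzn P := by
  obtain ⟨hq, hss⟩ := hsd
  have h11 := hq true true; rw [qev_tt, qev_tt] at h11
  have h10 := hq true false; rw [qev_tf, qev_tf] at h10
  have h01 := hq false true; rw [qev_ft, qev_ft] at h01
  have h00 := hq false false; rw [qev_ff, qev_ff] at h00
  obtain ⟨-, ⟨hgP, hzP, -⟩, hpP, -⟩ := facts P hP
  obtain ⟨-, ⟨hgQ, hzQ, -⟩, hpQ, -⟩ := facts Q hQ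
  have hg : gamma Q = gamma P := by rw [← hgP, ← hgQ, h11, h10]
  have hz : zeta Q = zeta P := by rw [← hzP, ← hzQ, h11, h01]
  exact ⟨hg, hz, by rw [chibar, chibar, hg, hss], hss, by rw [hpP, hpQ, h00, hz]⟩

-- more expansion lemmas
lemma prx_exp (R : Dist) : pr R (fun x _ _ _ => x) =
    R true true true true + R true true true false + R true true false true +
    R true true false false + R true false true true + R true false true false +
    R true false false true + R true false false false := by
  simp only [pr, Fintype.sum_bool]; norm_num; try ring
lemma pryx_exp (R : Dist) : pr R (fun x y _ _ => y && x) =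
    R true true true true + R true true true false + R true true false true +
    R true true false false := by
  simp only [pr, Fintype.sum_bool]; norm_num; try ring
lemma pryzt_exp (R : Dist) : pr R (fun _ y z t => (y && z) && t) =
    R true true true true + R false true true true := by
  simp only [pr, Fintype.sum_bool]; norm_num; try ring
lemma prynzt_exp (R : Dist) : pr R (fun _ y z t => (y && !z) && t) =
    R true true false true + R false true false true := by
  simp only [pr, Fintype.sum_bool]; norm_num; try ring
lemma prnyzt_exp (R : Dist) : pr R (fun _ y z t => (!y && z) && t) =
    R true false true true + R false false true true := by
  simp only [pr, Fintype.sum_bool]; norm_num; try ring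
lemma prnynzt2_exp (R : Dist) : pr R (fun _ y z t => (!y && !z) && t) =
    R true false false true + R false false false true := by
  simp only [pr, Fintype.sum_bool]; norm_num; try ring

lemma sens_eq (R : Dist) : sens R = pr R (fun x y _ _ => y && x) / pr R (fun x _ _ _ => x) := rfl
lemma prev_eq (R : Dist) : prev R = pr R (fun x _ _ _ => x) := rfl
lemma tau_eq (R : Dist) : tau R = pr R (fun _ _ _ t => t) := rfl
lemma q11_eq' (R : Dist) : q11 R = pr R (fun _ y z t => (y && z) && t) / pr R (fun _ _ _ t => t) := rfl
lemma q10_eq' (R : Dist) : q10 R = pr R (fun _ y z t => (y && !z) && t) / pr R (fun _ _ _ t => t) := rfl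
lemma q01_eq' (R : Dist) : q01 R = pr R (fun _ y z t => (!y && z) && t) / pr R (fun _ _ _ t => t) := rfl
lemma q00_eq' (R : Dist) : q00 R = pr R (fun _ y z t => (!y && !z) && t) / pr R (fun _ _ _ t => t) := rfl

noncomputable def Qa (P : Dist) (a : ℝ) : Dist
  | true, true, true, true => q11 P
  | true, true, false, true => q10 P
  | true, false, true, true => chibar P * (1 - sens P) - a
  | true, false, false, true => a
  | false, true, _, true => 0
  | false, false, true, true => q01 P - (chibar P * (1 - sens P) - a)
  | false, false, false, true => q00 P - a
  | _, _, _, false => 0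

lemma Qa_consistent (P : Dist) (hP : Setup P) (a : ℝ)
    (h0a : 0 ≤ a) (ha1 : a ≤ q00 P) (ha2 : a ≤ chibar P * (1 - sens P))
    (ha3 : chibar P * (1 - sens P) - a ≤ q01 P) :
    Consistent P (Qa P a) ∧ npvZ (Qa P a) = (q00 P - a) / (1 - zeta P) := by
  obtain ⟨⟨h11n, h10n, h01n, h00n⟩, ⟨hgP, hzP, hsum⟩, hpP, hsP, hc0, hc1, hcs⟩ := facts P hP
  obtain ⟨-, -, -, -, -, hg, hz, hz1, -, hgs, hs1⟩ := hP
  have hcne : chibar P ≠ 0 := ne_of_gt hc0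
  have hTQ : pr (Qa P a) (fun _ _ _ t => t) = 1 := by
    rw [prT_exp]; simp only [Qa]; linarith
  have hprevQ : pr (Qa P a) (fun x _ _ _ => x) = chibar P := by
    rw [prx_exp]; simp only [Qa]; linarith [hcs, hgP]
  have hyxQ : pr (Qa P a) (fun x y _ _ => y && x) = gamma P := by
    rw [pryx_exp]; simp only [Qa]; linarith
  have hsQ : sens (Qa P a) = sens P := by
    rw [sens_eq, hyxQ, hprevQ, div_eq_iff hcne]
    linarith [hcs, hgP]
  have hgQ : gamma (Qa P a) = gamma P := by
    rw [gamma_eq, hTQ, div_one, pryt_exp]; simp only [Qa]; linarith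
  have hzQ : zeta (Qa P a) = zeta P := by
    rw [zeta_eq, hTQ, div_one, przt_exp]; simp only [Qa]; linarith
  have hq11Q : q11 (Qa P a) = q11 P := by
    rw [q11_eq', hTQ, div_one, pryzt_exp]; simp only [Qa]; linarith
  have hq10Q : q10 (Qa P a) = q10 P := by
    rw [q10_eq', hTQ, div_one, prynzt_exp]; simp only [Qa]; linarith
  have hq01Q : q01 (Qa P a) = q01 P := by
    rw [q01_eq', hTQ, div_one, prnyzt_exp]; simp only [Qa]; linarith
  have hq00Q : q00 (Qa P a) = q00 P := by
    rw [q00_eq', hTQ, div_one, prnynzt2_exp]; simp only [Qa]; linarith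
  have hSetup : Setup (Qa P a) := by
    refine ⟨⟨?_, ?_⟩, ?_, ?_, ?_, ?_, ?_, ?_, ?_, ?_, ?_, ?_⟩
    · intro x y z t
      cases x <;> cases y <;> cases z <;> cases t <;>
        simp only [Qa] <;> linarith
    · simp only [Qa, Fintype.sum_bool]; linarith
    · intro x y; cases x <;> cases y <;> simp only [Qa]
    · constructor
      · rw [prev_eq, hprevQ]; exact hc0
      · rw [prev_eq, hprevQ]; exact hc1
    · rw [A2, prnxy_exp]; simp only [Qa]; ring
    · have hnum : pr (Qa P a) (fun x y z t => y && (x && t)) = gamma P := by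
        rw [pryxt_exp]; simp only [Qa]; linarith
      have hden : pr (Qa P a) (fun x y z t => x && t) = chibar P := by
        rw [prxt_exp]; simp only [Qa]; linarith [hcs, hgP]
      show pr (Qa P a) (fun x y z t => y && (x && t)) / pr (Qa P a) (fun x y z t => x && t)
        = sens (Qa P a)
      rw [hnum, hden, hsQ, div_eq_iff hcne]
      linarith [hcs, hgP]
    · rw [hgQ]; exact hg
    · rw [hzQ]; exact hz
    · rw [hzQ]; exact hz1
    · rw [tau_eq, hTQ]; norm_num
    · rw [hgQ, hsQ]; exact hgs
    · rw [hsQ]; exact hs1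
  refine ⟨⟨hSetup, ⟨?_, hsQ⟩⟩, ?_⟩
  · intro y0 z0
    cases y0 <;> cases z0
    · rw [qev_ff, qev_ff, hq00Q]
    · rw [qev_ft, qev_ft, hq01Q]
    · rw [qev_tf, qev_tf, hq10Q]
    · rw [qev_tt, qev_tt, hq11Q]
  · have hnum : pr (Qa P a) (fun x y z t => !x && (!z && t)) = q00 P - a := by
      rw [prnxnzt_exp]; simp only [Qa]; linarith
    have hden : pr (Qa P a) (fun x y z t => !z && t) = 1 - zeta P := by
      rw [prnzt_exp]; simp only [Qa]; linarith
    rw [npvZ_eq, hnum, hden]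


/-- Proposition, NPV of the new test: the new test's negative predictive
value satisfies
`NPV_z ∈ [max{0, P(y=0|z=0,t=1) − χ̄(1−σ)/(1−ζ)}, min{(1−χ̄)/(1−ζ), P(y=0|z=0,t=1)}]`,
these bounds are sharp, and they coincide with the four-case expressions of the paper. -/
theorem statement9 (P : Dist) (h : Setup P) :
    (∀ Q : Dist, Consistent P Q →
      npvZ Q ∈ Set.Icc (max 0 (pynGzn P - chibar P * (1 - sens P) / (1 - zeta P)))
        (min ((1 - chibar P) / (1 - zeta P)) (pynGzn P))) ∧
    (∃ Q : Dist, Consistent P Q ∧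
      npvZ Q = max 0 (pynGzn P - chibar P * (1 - sens P) / (1 - zeta P))) ∧
    (∃ Q : Dist, Consistent P Q ∧
      npvZ Q = min ((1 - chibar P) / (1 - zeta P)) (pynGzn P)) ∧
    (CaseC P → max 0 (pynGzn P - chibar P * (1 - sens P) / (1 - zeta P)) =
        pynGzn P - chibar P * (1 - sens P) / (1 - zeta P) ∧
      min ((1 - chibar P) / (1 - zeta P)) (pynGzn P) = (1 - chibar P) / (1 - zeta P)) ∧
    (CaseI P → max 0 (pynGzn P - chibar P * (1 - sens P) / (1 - zeta P)) =
        pynGzn P - chibar P * (1 - sens P) / (1 - zeta P) ∧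
      min ((1 - chibar P) / (1 - zeta P)) (pynGzn P) = pynGzn P) ∧
    (CaseU P → max 0 (pynGzn P - chibar P * (1 - sens P) / (1 - zeta P)) = 0 ∧
      min ((1 - chibar P) / (1 - zeta P)) (pynGzn P) = (1 - chibar P) / (1 - zeta P)) ∧
    (CaseX P → max 0 (pynGzn P - chibar P * (1 - sens P) / (1 - zeta P)) = 0 ∧
      min ((1 - chibar P) / (1 - zeta P)) (pynGzn P) = pynGzn P) := by
  have hSetup := h
  obtain ⟨⟨h11n, h10n, h01n, h00n⟩, ⟨hgP, hzP, hsum⟩, hpP, hsP, hc0, hc1, hcs⟩ := facts P h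
  obtain ⟨-, -, -, -, -, hg, hz, hz1, -, hgs, hs1⟩ := h
  have hW : (0:ℝ) < 1 - zeta P := by linarith
  have hchis : 0 ≤ chibar P * (1 - sens P) := mul_nonneg hc0.le (by linarith)
  have hkey : chibar P * (1 - sens P) ≤ q00 P + q01 P := by
    nlinarith [hcs, hc1, hsum, hgP]
  have hsub : pynGzn P - chibar P * (1 - sens P) / (1 - zeta P)
      = (q00 P - chibar P * (1 - sens P)) / (1 - zeta P) := by
    rw [hpP, div_sub_div_same]
  refine ⟨?_, ?_, ?_, ?_, ?_, ?_, ?_⟩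
  · -- universal bounds
    intro Q hQ
    obtain ⟨hQs, hsd⟩ := hQ
    obtain ⟨hgt, hzt, hct, hst, hpt⟩ := transfer P Q hSetup hQs hsd
    have hb := npv_bounds Q hQs
    rw [hzt, hct, hst, hpt] at hb
    exact Set.mem_Icc.mpr ⟨hb.1, hb.2⟩
  · -- lower endpoint attained
    refine ⟨Qa P (min (q00 P) (chibar P * (1 - sens P))), ?_⟩
    have hmin0 : 0 ≤ min (q00 P) (chibar P * (1 - sens P)) := le_min h00n hchis
    obtain ⟨hcons, hval⟩ := Qa_consistent P hSetup (min (q00 P) (chibar P * (1 - sens P)))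
      hmin0 (min_le_left _ _) (min_le_right _ _)
      (by rcases le_total (q00 P) (chibar P * (1 - sens P)) with hle | hle
          · rw [min_eq_left hle]; linarith
          · rw [min_eq_right hle]; linarith)
    refine ⟨hcons, ?_⟩
    rw [hval]
    rcases le_total (q00 P) (chibar P * (1 - sens P)) with hle | hle
    · rw [min_eq_left hle, sub_self, zero_div, eq_comm, max_eq_left]
      rw [hsub]
      exact div_nonpos_of_nonpos_of_nonneg (by linarith) hW.le
    · rw [min_eq_right hle, eq_comm, max_eq_right, hsub]
      rw [hsub]
      exact div_nonneg (by linarith) hW.le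
  · -- upper endpoint attained
    have hamax : (0:ℝ) ≤ max 0 (chibar P * (1 - sens P) - q01 P) := le_max_left _ _
    refine ⟨Qa P (max 0 (chibar P * (1 - sens P) - q01 P)), ?_⟩
    obtain ⟨hcons, hval⟩ := Qa_consistent P hSetup (max 0 (chibar P * (1 - sens P) - q01 P))
      hamax (max_le h00n (by linarith)) (max_le hchis (by linarith)) (by
        have := le_max_right (0:ℝ) (chibar P * (1 - sens P) - q01 P)
        linarith)
    refine ⟨hcons, ?_⟩
    rw [hval]
    rcases le_total (chibar P * (1 - sens P) - q01 P) 0 with hle | hle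
    · rw [max_eq_left hle, sub_zero, ← hpP, eq_comm, min_eq_right]
      rw [hpP, div_le_div_iff₀ hW hW]
      nlinarith [hcs, hgP, hsum, hW]
    · rw [max_eq_right hle, eq_comm, min_eq_left]
      · rw [div_eq_div_iff hW.ne' hW.ne']
        nlinarith [hcs, hgP, hsum]
      · rw [hpP, div_le_div_iff₀ hW hW]
        nlinarith [hcs, hgP, hsum, hW]
  · -- Case C
    intro hC
    have hC' : q00 P ≥ max (chibar P * (1 - sens P)) (1 - chibar P) := hC
    have hC1 : chibar P * (1 - sens P) ≤ q00 P := le_trans (le_max_left _ _) hC'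
    have hC2 : 1 - chibar P ≤ q00 P := le_trans (le_max_right _ _) hC'
    constructor
    · apply max_eq_right
      rw [hsub]; exact div_nonneg (by linarith) hW.le
    · apply min_eq_left
      rw [hpP, div_le_div_iff₀ hW hW]
      linarith [mul_le_mul_of_nonneg_right hC2 hW.le]
  · -- Case I
    intro hI
    obtain ⟨hI1, hI2⟩ : 1 - chibar P > q00 P ∧ q00 P ≥ chibar P * (1 - sens P) := hI
    constructor
    · apply max_eq_right
      rw [hsub]; exact div_nonneg (by linarith) hW.le
    · apply min_eq_right
      rw [hpP, div_le_div_iff₀ hW hW]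
      linarith [mul_le_mul_of_nonneg_right hI1.le hW.le]
  · -- Case U
    intro hU
    obtain ⟨hU1, hU2⟩ : chibar P * (1 - sens P) > q00 P ∧ q00 P ≥ 1 - chibar P := hU
    constructor
    · apply max_eq_left
      rw [hsub]; exact div_nonpos_of_nonpos_of_nonneg (by linarith) hW.le
    · apply min_eq_left
      rw [hpP, div_le_div_iff₀ hW hW]
      linarith [mul_le_mul_of_nonneg_right hU2 hW.le]
  · -- Case X
    intro hX
    have hX' : min (chibar P * (1 - sens P)) (1 - chibar P) > q00 P := hX
    have hX1 : q00 P < chibar P * (1 - sens P) := lt_of_lt_of_le hX' (min_le_left _ _)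
    have hX2 : q00 P < 1 - chibar P := lt_of_lt_of_le hX' (min_le_right _ _)
    constructor
    · apply max_eq_left
      rw [hsub]; exact div_nonpos_of_nonpos_of_nonneg (by linarith) hW.le
    · apply min_eq_right
      rw [hpP, div_le_div_iff₀ hW hW]
      linarith [mul_le_mul_of_nonneg_right hX2.le hW.le]

end PaperTest
end

section
/- (Corollary: Bounds Increase — NPV) Under assumptions (A1), (A2), (A4) and the testing logic, with P(y=1,z=1|t=1) > 0 and P(y=1,z=0|t=1) > 0, the sharp identified interval of the post-negative-result infection probability P(x=1|z=0,t=1) = 1 − NPV_z contains the pre-test value χ̄ = P(x=1|t=1) if and only if σ ≤ min{ γζ/P(y=1,z=1|t=1), γ(1−ζ)/P(y=1,z=0|t=1) }; more precisely, the sharp upper bound of P(x=1|z=0,t=1) is at least χ̄ if and only if σ ≤ γζ/P(y=1,z=1|t=1), and the sharp lower bound is at most χ̄ if and only if σ ≤ γ(1−ζ)/P(y=1,z=0|t=1). -/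
/-!
Population model: a pmf `P` on `{0,1}^4` over `(x, y, z, t)` where `x = true` means truly
infected, `y` is the established test result, `z` the new test result, and `t = true` means
the person belongs to the testing pool.  The testing logic requires `z = 1 → t = 1`.
-/

namespace PaperTest

/-- Sharp lower bound of the identified interval of `NPV_z = P(x=0 | z=0, t=1)`. -/
noncomputable def npvLo (P : Dist) : ℝ :=
  max 0 (pynGzn P - chibar P * (1 - sens P) / (1 - zeta P))

/-- Sharp upper bound of the identified interval of `NPV_z = P(x=0 | z=0, t=1)`. -/
noncomputable def npvHi (P : Dist) : ℝ :=
  min ((1 - chibar P) / (1 - zeta P)) (pynGzn P)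

/-- Corollary: Bounds Increase — NPV: with `P(y=1,z=1|t=1) > 0` and
`P(y=1,z=0|t=1) > 0`, the sharp identified interval `[1 − npvHi, 1 − npvLo]` of the
post-negative-result infection probability `P(x=1 | z=0, t=1) = 1 − NPV_z` contains the
pre-test value `χ̄ = P(x=1|t=1)` iff
`σ ≤ min{γζ/P(y=1,z=1|t=1), γ(1−ζ)/P(y=1,z=0|t=1)}`; more precisely the sharp upper
bound is at least `χ̄` iff `σ ≤ γζ/P(y=1,z=1|t=1)`, and the sharp lower bound is at most
`χ̄` iff `σ ≤ γ(1−ζ)/P(y=1,z=0|t=1)`. -/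
theorem statement11 (P : Dist) (h : Setup P) (h11 : 0 < q11 P) (h10 : 0 < q10 P) :
    (chibar P ∈ Set.Icc (1 - npvHi P) (1 - npvLo P) ↔
      sens P ≤ min (gamma P * zeta P / q11 P) (gamma P * (1 - zeta P) / q10 P)) ∧
    (chibar P ≤ 1 - npvLo P ↔ sens P ≤ gamma P * zeta P / q11 P) ∧
    (1 - npvHi P ≤ chibar P ↔ sens P ≤ gamma P * (1 - zeta P) / q10 P) := by
  obtain ⟨hpmf, htl, ha1, ha2, ha4, hγ, hζ0, hζ1, hτ, hγσ, hσ1⟩ := h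
  have hσ : 0 < sens P := lt_trans hγ hγσ
  have hζ1' : 0 < 1 - zeta P := by linarith
  have hτ' : 0 < pr P (fun _ _ _ t => t) := hτ
  -- γ = q11 + q10
  have hsum : q11 P + q10 P = gamma P := by
    unfold q11 q10 gamma cpr
    rw [← add_div]
    congr 1
    simp [pr, Fintype.sum_bool]; ring
  -- P(¬z ∧ t) = (1 - ζ) * τ
  have hznt : pr P (fun _ _ z t => !z && t) = (1 - zeta P) * pr P (fun _ _ _ t => t) := by
    have hz : pr P (fun x _ z t => z && t) = zeta P * pr P (fun _ _ _ t => t) := by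
      unfold zeta cpr
      field_simp
    have : pr P (fun x _ z t => z && t) + pr P (fun _ _ z t => !z && t)
        = pr P (fun _ _ _ t => t) := by
      simp [pr, Fintype.sum_bool]; ring
    linarith
  have hD : 0 < pr P (fun _ _ z t => !z && t) := by rw [hznt]; positivity
  -- pynGzn = 1 - q10 / (1 - ζ)
  have hpyn : pynGzn P = 1 - q10 P / (1 - zeta P) := by
    have hnum : pr P (fun _ y z t => !y && (!z && t))
        = pr P (fun _ _ z t => !z && t) - pr P (fun _ y z t => (y && !z) && t) := by
      simp [pr, Fintype.sum_bool]; ring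
    have hq10 : pr P (fun _ y z t => (y && !z) && t)
        = q10 P * pr P (fun _ _ _ t => t) := by
      unfold q10 cpr; field_simp
    unfold pynGzn cpr
    rw [hnum, hq10, hznt]
    field_simp
  have hchi1 : chibar P < 1 := (div_lt_one hσ).mpr hγσ
  have hchi0 : 0 < chibar P := div_pos hγ hσ
  -- part (b): lower endpoint of NPV interval
  have hb : chibar P ≤ 1 - npvLo P ↔ sens P ≤ gamma P * zeta P / q11 P := by
    rw [npvLo, le_sub_comm, max_le_iff]
    have h0 : (0:ℝ) ≤ 1 - chibar P := by linarith
    have heq : (1 - chibar P) - (pynGzn P - chibar P * (1 - sens P) / (1 - zeta P))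
        = (gamma P * zeta P - sens P * q11 P) / (sens P * (1 - zeta P)) := by
      rw [hpyn, chibar, ← hsum]
      field_simp
      ring
    constructor
    · rintro ⟨-, h2⟩
      rw [le_div_iff₀ h11]
      have : 0 ≤ (gamma P * zeta P - sens P * q11 P) / (sens P * (1 - zeta P)) := by
        rw [← heq]; linarith
      have hpos : 0 < sens P * (1 - zeta P) := by positivity
      rw [le_div_iff₀ hpos, zero_mul] at this
      linarith
    · intro hle
      rw [le_div_iff₀ h11] at hle
      refine ⟨h0, ?_⟩
      have : 0 ≤ (gamma P * zeta P - sens P * q11 P) / (sens P * (1 - zeta P)) := by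
        apply div_nonneg (by linarith) (by positivity)
      linarith [heq ▸ this]
  -- part (c): upper endpoint
  have hc : 1 - npvHi P ≤ chibar P ↔ sens P ≤ gamma P * (1 - zeta P) / q10 P := by
    rw [npvHi, sub_le_comm, le_min_iff]
    have ha : 1 - chibar P ≤ (1 - chibar P) / (1 - zeta P) := by
      rw [le_div_iff₀ hζ1']
      nlinarith
    have hbiff : 1 - chibar P ≤ pynGzn P ↔ sens P ≤ gamma P * (1 - zeta P) / q10 P := by
      rw [hpyn, chibar]
      rw [show (1 : ℝ) - gamma P / sens P ≤ 1 - q10 P / (1 - zeta P)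
            ↔ q10 P / (1 - zeta P) ≤ gamma P / sens P by constructor <;> intro <;> linarith]
      rw [div_le_div_iff₀ hζ1' hσ, le_div_iff₀ h10, mul_comm (q10 P) (sens P)]
    constructor
    · rintro ⟨-, h2⟩; exact hbiff.mp h2
    · intro hle; exact ⟨ha, hbiff.mpr hle⟩
  refine ⟨?_, hb, hc⟩
  rw [Set.mem_Icc, le_min_iff]
  constructor
  · rintro ⟨h1, h2⟩; exact ⟨hb.mp h2, hc.mp h1⟩
  · rintro ⟨h1, h2⟩; exact ⟨hc.mpr h2, hb.mpr h1⟩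

end PaperTest
end

section
/- (Dilation characterization) Under assumptions (A1), (A2), (A4) and the testing logic, with P(y=1,z=1|t=1) > 0 and P(y=1,z=0|t=1) > 0, the new test is a dilation on the tested population — i.e. the pre-test infection probability χ̄ = P(x=1|t=1) belongs both to the sharp identified set of P(x=1|z=1,t=1) and to the sharp identified set of P(x=1|z=0,t=1) — if and only if σ ≤ min{ γζ/P(y=1,z=1|t=1), γ(1−ζ)/P(y=1,z=0|t=1) }. -/
/-!
Population model: a pmf `P` on `{0,1}^4` over `(x, y, z, t)` where `x = true` means truly
infected, `y` is the established test result, `z` the new test result, and `t = true` means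
the person belongs to the testing pool.  The testing logic requires `z = 1 → t = 1`.
-/

namespace PaperTest

private lemma pr_nonneg (P : Dist) (hP : ∀ x y z t, 0 ≤ P x y z t)
    (A : Bool → Bool → Bool → Bool → Bool) : 0 ≤ pr P A := by
  refine Finset.sum_nonneg fun x _ => Finset.sum_nonneg fun y _ => Finset.sum_nonneg fun z _ =>
    Finset.sum_nonneg fun t _ => ?_
  split_ifs
  · exact hP x y z t
  · exact le_refl 0

private lemma cpr_nonneg (P : Dist) (hP : ∀ x y z t, 0 ≤ P x y z t)
    (A B : Bool → Bool → Bool → Bool → Bool) : 0 ≤ cpr P A B :=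
  div_nonneg (pr_nonneg P hP _) (pr_nonneg P hP _)

set_option maxHeartbeats 1000000 in
/-- Dilation characterization: with `P(y=1,z=1|t=1) > 0` and
`P(y=1,z=0|t=1) > 0`, the new test is a dilation on the tested population — i.e. the
pre-test infection probability `χ̄ = P(x=1|t=1)` belongs both to the sharp identified
set of `P(x=1 | z=1, t=1)` and to the sharp identified set of `P(x=1 | z=0, t=1)`
(each being the set of values over all distributions consistent with the data) — if and
only if `σ ≤ min{γζ/P(y=1,z=1|t=1), γ(1−ζ)/P(y=1,z=0|t=1)}`. -/
theorem statement12 (P : Dist) (h : Setup P) (h11 : 0 < q11 P) (h10 : 0 < q10 P) :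
    (chibar P ∈ {v : ℝ | ∃ Q : Dist, Consistent P Q ∧
        cpr Q (fun x _ _ _ => x) (fun _ _ z t => z && t) = v} ∧
      chibar P ∈ {v : ℝ | ∃ Q : Dist, Consistent P Q ∧
        cpr Q (fun x _ _ _ => x) (fun _ _ z t => !z && t) = v}) ↔
    sens P ≤ min (gamma P * zeta P / q11 P) (gamma P * (1 - zeta P) / q10 P) := by
  obtain ⟨hpmf, htl, ha1, ha2, ha4, hg, hz0, hz1, ht, hgs, hs1⟩ := h
  have hs0 : 0 < sens P := lt_trans hg hgs
  have hτ0 : (0:ℝ) < pr P (fun _ _ _ t => t) := ht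
  have hτne : pr P (fun _ _ _ t => t) ≠ 0 := ne_of_gt hτ0
  -- basic identities for P
  have I1 : q11 P + q10 P = gamma P := by
    simp only [q11, q10, gamma, cpr]
    rw [← add_div]
    congr 1
    simp [pr, Fintype.sum_bool]; ring
  have I2 : q11 P + q01 P = zeta P := by
    simp only [q11, q01, zeta, cpr]
    rw [← add_div]
    congr 1
    simp [pr, Fintype.sum_bool]; ring
  have I3 : q11 P + q10 P + q01 P + q00 P = 1 := by
    simp only [q11, q10, q01, q00, cpr]
    rw [← add_div, ← add_div, ← add_div, div_eq_one_iff_eq hτne]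
    simp [pr, Fintype.sum_bool]; ring
  have hq01 : 0 ≤ q01 P := cpr_nonneg P hpmf.1 _ _
  have hq00 : 0 ≤ q00 P := cpr_nonneg P hpmf.1 _ _
  -- P-side data identities (rewriting the SameData functionals)
  have hPD11 : cpr P (fun _ y z _ => ((y == true) && (z == true))) (fun _ _ _ t => t) = q11 P := by
    simp [cpr, q11, pr, Fintype.sum_bool]
  have hPD10 : cpr P (fun _ y z _ => ((y == true) && (z == false))) (fun _ _ _ t => t) = q10 P := by
    simp [cpr, q10, pr, Fintype.sum_bool]
  have hPD01 : cpr P (fun _ y z _ => ((y == false) && (z == true))) (fun _ _ _ t => t) = q01 P := by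
    simp [cpr, q01, pr, Fintype.sum_bool]
  have hPD00 : cpr P (fun _ y z _ => ((y == false) && (z == false))) (fun _ _ _ t => t) = q00 P := by
    simp [cpr, q00, pr, Fintype.sum_bool]
  constructor
  · -- forward direction
    rintro ⟨⟨Q1, ⟨hS1, hD1⟩, hv1⟩, ⟨Q2, ⟨hS2, hD2⟩, hv2⟩⟩
    refine le_min ?_ ?_
    · -- use Q1
      obtain ⟨hpmfQ, htlQ, ha1Q, ha2Q, ha4Q, hgQ, hz0Q, hz1Q, htQ, hgsQ, hs1Q⟩ := hS1
      have hτQ : (0:ℝ) < pr Q1 (fun _ _ _ t => t) := htQ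
      have hτQne : pr Q1 (fun _ _ _ t => t) ≠ 0 := ne_of_gt hτQ
      -- Q1(x=0,y=1,z=1,t=1) = 0 from A2
      have hA2e : Q1 false true true true = 0 := by
        have h0 := ha2Q
        simp [A2, pr, Fintype.sum_bool] at h0
        have n1 := hpmfQ.1 false true true true
        have n2 := hpmfQ.1 false true true false
        have n3 := hpmfQ.1 false true false true
        have n4 := hpmfQ.1 false true false false
        linarith
      -- numerator identities from SameData
      have e11 := hD1.1 true true
      rw [hPD11] at e11
      simp only [cpr] at e11
      rw [div_eq_iff hτQne] at e11
      have e01 := hD1.1 false true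
      rw [hPD01] at e01
      simp only [cpr] at e01
      rw [div_eq_iff hτQne] at e01
      -- denominator of hv1
      have hden : pr Q1 (fun x y z t => z && t) =
          (q11 P + q01 P) * pr Q1 (fun _ _ _ t => t) := by
        simp only [pr, Fintype.sum_bool] at e11 e01 ⊢
        simp at e11 e01 ⊢
        linarith
      have hdenpos : 0 < pr Q1 (fun x y z t => z && t) := by
        rw [hden, I2]; positivity
      simp only [cpr, chibar] at hv1
      rw [div_eq_div_iff (ne_of_gt hdenpos) (ne_of_gt hs0)] at hv1
      rw [hden, I2] at hv1
      -- x∧z∧t mass ≥ q11 mass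
      have hmass : q11 P * pr Q1 (fun _ _ _ t => t) ≤
          pr Q1 (fun x y z t => x && (z && t)) := by
        have n1 := hpmfQ.1 true false true true
        simp only [pr, Fintype.sum_bool] at e11 ⊢
        simp at e11 ⊢
        linarith [hA2e]
      have h2 : q11 P * pr Q1 (fun _ _ _ t => t) * sens P ≤
          gamma P * (zeta P * pr Q1 (fun _ _ _ t => t)) := by
        rw [← hv1]
        exact mul_le_mul_of_nonneg_right hmass hs0.le
      have h3 : (sens P * q11 P) * pr Q1 (fun _ _ _ t => t) ≤
          (gamma P * zeta P) * pr Q1 (fun _ _ _ t => t) := by linarith [h2]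
      rw [le_div_iff₀ h11]
      exact le_of_mul_le_mul_right h3 hτQ
    · -- use Q2
      obtain ⟨hpmfQ, htlQ, ha1Q, ha2Q, ha4Q, hgQ, hz0Q, hz1Q, htQ, hgsQ, hs1Q⟩ := hS2
      have hτQ : (0:ℝ) < pr Q2 (fun _ _ _ t => t) := htQ
      have hτQne : pr Q2 (fun _ _ _ t => t) ≠ 0 := ne_of_gt hτQ
      have hA2e : Q2 false true false true = 0 := by
        have h0 := ha2Q
        simp [A2, pr, Fintype.sum_bool] at h0
        have n1 := hpmfQ.1 false true true true
        have n2 := hpmfQ.1 false true true false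
        have n3 := hpmfQ.1 false true false true
        have n4 := hpmfQ.1 false true false false
        linarith
      have e10 := hD2.1 true false
      rw [hPD10] at e10
      simp only [cpr] at e10
      rw [div_eq_iff hτQne] at e10
      have e00 := hD2.1 false false
      rw [hPD00] at e00
      simp only [cpr] at e00
      rw [div_eq_iff hτQne] at e00
      have hden : pr Q2 (fun x y z t => !z && t) =
          (q10 P + q00 P) * pr Q2 (fun _ _ _ t => t) := by
        simp only [pr, Fintype.sum_bool] at e10 e00 ⊢
        simp at e10 e00 ⊢
        linarith
      have h1z : q10 P + q00 P = 1 - zeta P := by linarith [I2, I3]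
      have hdenpos : 0 < pr Q2 (fun x y z t => !z && t) := by
        rw [hden, h1z]
        have : (0:ℝ) < 1 - zeta P := by linarith
        positivity
      simp only [cpr, chibar] at hv2
      rw [div_eq_div_iff (ne_of_gt hdenpos) (ne_of_gt hs0)] at hv2
      rw [hden, h1z] at hv2
      have hmass : q10 P * pr Q2 (fun _ _ _ t => t) ≤
          pr Q2 (fun x y z t => x && (!z && t)) := by
        have n1 := hpmfQ.1 true false false true
        simp only [pr, Fintype.sum_bool] at e10 ⊢
        simp at e10 ⊢
        linarith [hA2e]
      have h2 : q10 P * pr Q2 (fun _ _ _ t => t) * sens P ≤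
          gamma P * ((1 - zeta P) * pr Q2 (fun _ _ _ t => t)) := by
        rw [← hv2]
        exact mul_le_mul_of_nonneg_right hmass hs0.le
      have h3 : (sens P * q10 P) * pr Q2 (fun _ _ _ t => t) ≤
          (gamma P * (1 - zeta P)) * pr Q2 (fun _ _ _ t => t) := by linarith [h2]
      rw [le_div_iff₀ h10]
      exact le_of_mul_le_mul_right h3 hτQ
  · -- backward direction: construct Q
    intro hle
    rw [le_min_iff, le_div_iff₀ h11, le_div_iff₀ h10] at hle
    obtain ⟨hle1, hle2⟩ := hle
    have hsne : sens P ≠ 0 := ne_of_gt hs0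
    have haa0 : 0 ≤ gamma P * zeta P / sens P - q11 P := by
      rw [sub_nonneg, le_div_iff₀ hs0]; linarith
    have hbb0 : 0 ≤ gamma P * (1 - zeta P) / sens P - q10 P := by
      rw [sub_nonneg, le_div_iff₀ hs0]; linarith
    have haaC : gamma P * zeta P / sens P - q11 P ≤ q01 P := by
      have h1 : gamma P * zeta P / sens P ≤ zeta P := by
        rw [div_le_iff₀ hs0]; nlinarith
      linarith [I2]
    have hbbD : gamma P * (1 - zeta P) / sens P - q10 P ≤ q00 P := by
      have h1z : (0:ℝ) < 1 - zeta P := by linarith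
      have h1 : gamma P * (1 - zeta P) / sens P ≤ 1 - zeta P := by
        rw [div_le_iff₀ hs0]; nlinarith
      linarith [I2, I3]
    set Q : Dist := fun x y z t =>
      if t then
        if x then
          if y then (if z then q11 P / 2 else q10 P / 2)
          else (if z then (gamma P * zeta P / sens P - q11 P) / 2
                else (gamma P * (1 - zeta P) / sens P - q10 P) / 2)
        else
          if y then 0
          else (if z then (q01 P - (gamma P * zeta P / sens P - q11 P)) / 2
                else (q00 P - (gamma P * (1 - zeta P) / sens P - q10 P)) / 2)
      else if x then 0 else if y then 0 else if z then 0 else 1/2 with hQdef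
    -- pr computations for Q
    have N1 : pr Q (fun _ _ _ t => t) = 1/2 := by
      simp [hQdef, pr, Fintype.sum_bool]; linarith
    have NX : pr Q (fun x _ _ _ => x) = gamma P / (2 * sens P) := by
      simp [hQdef, pr, Fintype.sum_bool]
      field_simp; ring
    have NXT : pr Q (fun x _ _ t => x && t) = gamma P / (2 * sens P) := by
      simp [hQdef, pr, Fintype.sum_bool]
      field_simp; ring
    have NYX : pr Q (fun x y _ _ => y && x) = gamma P / 2 := by
      simp [hQdef, pr, Fintype.sum_bool]; linarith [I1]
    have NYXT : pr Q (fun x y _ t => y && (x && t)) = gamma P / 2 := by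
      simp [hQdef, pr, Fintype.sum_bool]; linarith [I1]
    have NYT : pr Q (fun _ y _ t => y && t) = gamma P / 2 := by
      simp [hQdef, pr, Fintype.sum_bool]; linarith [I1]
    have NZT : pr Q (fun _ _ z t => z && t) = zeta P / 2 := by
      simp [hQdef, pr, Fintype.sum_bool]; linarith [I2]
    have NNZT : pr Q (fun _ _ z t => !z && t) = (1 - zeta P) / 2 := by
      simp [hQdef, pr, Fintype.sum_bool]; linarith [I2, I3]
    have NXZT : pr Q (fun x _ z t => x && (z && t)) = gamma P * zeta P / (2 * sens P) := by
      simp [hQdef, pr, Fintype.sum_bool]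
      field_simp; ring
    have NXNZT : pr Q (fun x _ z t => x && (!z && t)) = gamma P * (1 - zeta P) / (2 * sens P) := by
      simp [hQdef, pr, Fintype.sum_bool]
      field_simp; ring
    have hgne : gamma P ≠ 0 := ne_of_gt hg
    have hsensQ : sens Q = sens P := by
      rw [show sens Q = pr Q (fun x y z t => y && x) / pr Q (fun x _ _ _ => x) from rfl, NYX, NX]
      field_simp
    have hgammaQ : gamma Q = gamma P := by
      rw [show gamma Q = pr Q (fun x y z t => y && t) / pr Q (fun _ _ _ t => t) from rfl, NYT, N1]
      ring
    have hzetaQ : zeta Q = zeta P := by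
      rw [show zeta Q = pr Q (fun x y z t => z && t) / pr Q (fun _ _ _ t => t) from rfl, NZT, N1]
      ring
    have htauQ : tau Q = 1/2 := N1
    have hSetupQ : Setup Q := by
      refine ⟨⟨?_, ?_⟩, ?_, ⟨?_, ?_⟩, ?_, ?_, ?_, ?_, ?_, ?_, ?_, ?_⟩
      · intro x y z t
        cases x <;> cases y <;> cases z <;> cases t <;>
          simp [hQdef] <;> linarith
      · simp [hQdef, Fintype.sum_bool]; linarith
      · intro x y; cases x <;> cases y <;> simp [hQdef]
      · -- 0 < prev Q
        show 0 < pr Q (fun x _ _ _ => x)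
        rw [NX]; positivity
      · -- prev Q < 1
        show pr Q (fun x _ _ _ => x) < 1
        rw [NX, div_lt_one (by positivity)]
        nlinarith
      · -- A2
        show pr Q (fun x y _ _ => !x && y) = 0
        simp [hQdef, pr, Fintype.sum_bool]
      · -- A4
        show cpr Q (fun _ y _ _ => y) (fun x _ _ t => x && t) = sens Q
        rw [hsensQ]
        simp only [cpr]
        rw [show (fun x y z t => (fun _ y _ _ => y) x y z t && (fun x _ _ t => x && t) x y z t) =
          (fun x y z t => y && (x && t)) from rfl, NYXT, NXT]
        field_simp
      · rw [hgammaQ]; exact hg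
      · rw [hzetaQ]; exact hz0
      · rw [hzetaQ]; exact hz1
      · rw [htauQ]; norm_num
      · rw [hgammaQ, hsensQ]; exact hgs
      · rw [hsensQ]; exact hs1
    have hSD : SameData P Q := by
      refine ⟨?_, hsensQ⟩
      intro y0 z0
      cases y0 <;> cases z0
      · rw [hPD00]
        simp only [cpr]
        have hnum : pr Q (fun x y z t => ((y == false) && (z == false)) && t) = q00 P / 2 := by
          simp [hQdef, pr, Fintype.sum_bool]; ring
        rw [show (fun x y z t => (fun _ y z _ => ((y == false) && (z == false))) x y z t &&
          (fun _ _ _ t => t) x y z t) = (fun x y z t => ((y == false) && (z == false)) && t)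
          from rfl, hnum, N1]
        ring
      · rw [hPD01]
        simp only [cpr]
        have hnum : pr Q (fun x y z t => ((y == false) && (z == true)) && t) = q01 P / 2 := by
          simp [hQdef, pr, Fintype.sum_bool]; ring
        rw [show (fun x y z t => (fun _ y z _ => ((y == false) && (z == true))) x y z t &&
          (fun _ _ _ t => t) x y z t) = (fun x y z t => ((y == false) && (z == true)) && t)
          from rfl, hnum, N1]
        ring
      · rw [hPD10]
        simp only [cpr]
        have hnum : pr Q (fun x y z t => ((y == true) && (z == false)) && t) = q10 P / 2 := by
          simp [hQdef, pr, Fintype.sum_bool]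
        rw [show (fun x y z t => (fun _ y z _ => ((y == true) && (z == false))) x y z t &&
          (fun _ _ _ t => t) x y z t) = (fun x y z t => ((y == true) && (z == false)) && t)
          from rfl, hnum, N1]
        ring
      · rw [hPD11]
        simp only [cpr]
        have hnum : pr Q (fun x y z t => ((y == true) && (z == true)) && t) = q11 P / 2 := by
          simp [hQdef, pr, Fintype.sum_bool]
        rw [show (fun x y z t => (fun _ y z _ => ((y == true) && (z == true))) x y z t &&
          (fun _ _ _ t => t) x y z t) = (fun x y z t => ((y == true) && (z == true)) && t)
          from rfl, hnum, N1]
        ring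
    have hzne : zeta P ≠ 0 := ne_of_gt hz0
    have h1zne : (1:ℝ) - zeta P ≠ 0 := by intro hc; linarith [hz1, (sub_eq_zero.mp hc)]
    constructor
    · refine ⟨Q, ⟨hSetupQ, hSD⟩, ?_⟩
      simp only [cpr, chibar]
      rw [show (fun x y z t => (fun x _ _ _ => x) x y z t && (fun _ _ z t => z && t) x y z t) =
        (fun x y z t => x && (z && t)) from rfl, NXZT, NZT]
      field_simp
    · refine ⟨Q, ⟨hSetupQ, hSD⟩, ?_⟩
      simp only [cpr, chibar]
      rw [show (fun x y z t => (fun x _ _ _ => x) x y z t && (fun _ _ z t => !z && t) x y z t) =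
        (fun x y z t => x && (!z && t)) from rfl, NXNZT, NNZT]
      field_simp

end PaperTest
end

section
/- (Sufficient condition to avoid dilation) Under assumptions (A1), (A2), (A4) and the testing logic, with P(y=1,z=1|t=1) > 0, P(y=1,z=0|t=1) > 0 and σ > 0, let Σ := P(z=1|y=1,t=1) be the new test's apparent sensitivity and let Σ̲ ∈ (0,1] be a minimum sensitivity threshold. If Σ > Σ̲ and ζ ≤ σ·Σ̲, then σ > γζ/P(y=1,z=1|t=1), and consequently the new test is not a dilation (the dilation condition σ ≤ min{γζ/P(y=1,z=1|t=1), γ(1−ζ)/P(y=1,z=0|t=1)} fails). -/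
/-!
Population model: a pmf `P` on `{0,1}^4` over `(x, y, z, t)` where `x = true` means truly
infected, `y` is the established test result, `z` the new test result, and `t = true` means
the person belongs to the testing pool.  The testing logic requires `z = 1 → t = 1`.
-/

namespace PaperTest

/-- The new test's apparent sensitivity `Σ = P(z=1 | y=1, t=1)`. -/
noncomputable def appSens (P : Dist) : ℝ := cpr P (fun _ _ z _ => z) (fun _ y _ t => y && t)

/-- Sufficient condition to avoid dilation: with `P(y=1,z=1|t=1) > 0`,
`P(y=1,z=0|t=1) > 0` and `σ > 0`, if the apparent sensitivity `Σ = P(z=1|y=1,t=1)`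
exceeds a minimum threshold `Σ̲ ∈ (0,1]` and `ζ ≤ σ·Σ̲`, then
`σ > γζ/P(y=1,z=1|t=1)`, and consequently the dilation condition
`σ ≤ min{γζ/P(y=1,z=1|t=1), γ(1−ζ)/P(y=1,z=0|t=1)}` fails. -/
theorem statement13 (P : Dist) (h : Setup P) (h11 : 0 < q11 P) (h10 : 0 < q10 P)
    (hσ : 0 < sens P) (Sigmin : ℝ) (hS0 : 0 < Sigmin) (hS1 : Sigmin ≤ 1)
    (hA : Sigmin < appSens P) (hz : zeta P ≤ sens P * Sigmin) :
    gamma P * zeta P / q11 P < sens P ∧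
    ¬ sens P ≤ min (gamma P * zeta P / q11 P) (gamma P * (1 - zeta P) / q10 P) := by
  obtain ⟨hpmf, htl, ha1, ha2, ha4, hγ, hζ0, hζ1, hτ, hγσ, hσ1⟩ := h
  -- abbreviations
  set a := pr P (fun _ y z t => (y && z) && t) with ha
  set b := pr P (fun _ y _ t => y && t) with hb
  set c := pr P (fun _ _ _ t => t) with hc
  have hq11 : q11 P = a / c := by
    simp only [q11, cpr, ha, hc]
  have hgam : gamma P = b / c := by
    simp only [gamma, cpr, hb, hc]
  have happ : appSens P = a / b := by
    simp only [appSens, cpr, ha, hb]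
    congr 2
    funext x y z t
    cases y <;> cases z <;> cases t <;> rfl
  have hc0 : 0 < c := hτ
  have hb0 : 0 < b := by
    rcases lt_or_ge 0 b with h' | h'
    · exact h'
    · exfalso
      have : gamma P ≤ 0 := by
        rw [hgam]
        exact div_nonpos_of_nonpos_of_nonneg h' hc0.le
      linarith
  have key : q11 P = gamma P * appSens P := by
    rw [hq11, hgam, happ]
    field_simp
  have hApos : 0 < appSens P := lt_trans hS0 hA
  have hfrac : gamma P * zeta P / q11 P = zeta P / appSens P := by
    rw [key, mul_comm (gamma P) (appSens P)]
    rw [mul_comm (gamma P) (zeta P)]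
    rw [mul_div_mul_right _ _ (ne_of_gt hγ)]
  have hmain : gamma P * zeta P / q11 P < sens P := by
    rw [hfrac, div_lt_iff₀ hApos]
    calc zeta P ≤ sens P * Sigmin := hz
      _ < sens P * appSens P := by exact (mul_lt_mul_iff_right₀ hσ).mpr hA
  refine ⟨hmain, fun hle => ?_⟩
  have := le_trans hle (min_le_left _ _)
  linarith

end PaperTest
end
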